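/- arXiv:0902.0835 — 2 statements merged into one kernel-verified Lean document; each statement's English description precedes it below -/
import Mathlib

section
/- With the notation of a conformal perturbation, if D is invertible then D_h is invertible and D_h^{-1} [D_h, a]_{σ_h} = e^{-h} D^{-1} [D, σ_{h/2}(a)] e^h for all a in A. Consequently, for any a_0,...,a_p in A, Tr(γ D_h^{-1}[D_h, a_0]_{σ_h} ··· D_h^{-1}[D_h, a_p]_{σ_h}) = Tr(γ D^{-1}[D, σ_{h/2}(a_0)] ··· D^{-1}[D, σ_{h/2}(a_p)]), whenever both products are trace class. -/
/-!
Write `E = e^h` and `F = e^{-h} = E⁻¹`, so that `D_h = E D E` and `σ_h(b) = E² b F²`.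
Cancelling the inner factors `F E` gives
`D_h⁻¹ [D_h, b]_{σ_h} = F D⁻¹ [D, E b F] E`, i.e. each factor of the first product is the
conjugate by `F` of the corresponding factor of the second. The product of the conjugates is the
conjugate of the product, and the outer `F … E` is removed by traciality once `γ` is moved
past `E`.
-/

/-- `e^x` in the algebra of bounded operators. -/
noncomputable def cExp {H : Type*} [NormedAddCommGroup H] [InnerProductSpace ℂ H]
    [CompleteSpace H] (x : H →L[ℂ] H) : H →L[ℂ] H :=
  NormedSpace.exp x

section Monoid

variable {M : Type*} [Monoid M]

theorem sandwich_mul_sandwich_eq_one {D Dinv E F : M} (hD : Dinv * D = 1) (hE : F * E = 1) :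
    (F * Dinv * F) * (E * D * E) = 1 := by
  have cancel : ∀ {x y : M}, x * y = 1 → ∀ z, x * (y * z) = z := fun hxy z => by
    rw [← mul_assoc, hxy, one_mul]
  simp only [mul_assoc, cancel hE]
  rw [← mul_assoc Dinv D, hD, one_mul, hE]

theorem List.prod_ofFn_conj {E F : M} (hEF : E * F = 1) (hFE : F * E = 1) {n : ℕ}
    (f : Fin n → M) : (List.ofFn fun i => F * f i * E).prod = F * (List.ofFn f).prod * E := by
  induction n with
  | zero => simp [hFE]
  | succ n ih =>
    rw [List.ofFn_succ, List.prod_cons, ih, List.ofFn_succ, List.prod_cons]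
    simp only [mul_assoc, ← mul_assoc E F, hEF, one_mul]

theorem trace_mul_conj {α : Type*} (Tr : M → α) (hTr : ∀ S T : M, Tr (S * T) = Tr (T * S))
    {γ E F : M} (hγE : Commute γ E) (hEF : E * F = 1) (x : M) :
    Tr (γ * (F * x * E)) = Tr (γ * x) := by
  calc Tr (γ * (F * x * E)) = Tr ((γ * F * x) * E) := by simp only [mul_assoc]
    _ = Tr (E * γ * F * x) := by rw [hTr, mul_assoc, mul_assoc, mul_assoc]
    _ = Tr (γ * x) := by rw [← hγE.eq, mul_assoc γ E F, hEF, mul_one]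

end Monoid

theorem sandwich_mul_twisted_commutator {R : Type*} [Ring R] {E F : R} (hFE : F * E = 1)
    (D Dinv b : R) :
    (F * Dinv * F) * ((E * D * E) * b - (E * E * b * (F * F)) * (E * D * E)) =
      F * (Dinv * (D * (E * b * F) - (E * b * F) * D)) * E := by
  have cancel : ∀ z, F * (E * z) = z := fun z => by rw [← mul_assoc, hFE, one_mul]
  simp only [mul_sub, sub_mul, mul_assoc, cancel, hFE, mul_one]

section cExp

variable {H : Type*} [NormedAddCommGroup H] [InnerProductSpace ℂ H] [CompleteSpace H]

theorem cExp_mul_cExp_neg (x : H →L[ℂ] H) : cExp x * cExp (-x) = 1 := by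
  -- the algebraic laws of `NormedSpace.exp` are stated for normed `ℚ`-algebras
  let +nondep : NormedAlgebra ℚ (H →L[ℂ] H) := .restrictScalars ℚ ℂ _
  rw [cExp, cExp, ← NormedSpace.exp_add_of_commute (Commute.refl x).neg_right, add_neg_cancel,
    NormedSpace.exp_zero]

theorem cExp_neg_mul_cExp (x : H →L[ℂ] H) : cExp (-x) * cExp x = 1 := by
  simpa using cExp_mul_cExp_neg (-x)

theorem cExp_two_nsmul (x : H →L[ℂ] H) : cExp (2 • x) = cExp x * cExp x := by
  let +nondep : NormedAlgebra ℚ (H →L[ℂ] H) := .restrictScalars ℚ ℂ _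
  rw [cExp, NormedSpace.exp_nsmul, sq]
  rfl

theorem cExp_neg_two_nsmul (x : H →L[ℂ] H) : cExp (-(2 • x)) = cExp (-x) * cExp (-x) := by
  rw [← smul_neg, cExp_two_nsmul]

theorem cExp_conformal_twisted_commutator (D Dinv h b : H →L[ℂ] H) :
    (cExp (-h) * Dinv * cExp (-h)) *
        ((cExp h * D * cExp h) * b -
          (cExp (2 • h) * b * cExp (-(2 • h))) * (cExp h * D * cExp h)) =
      cExp (-h) * (Dinv * (D * (cExp h * b * cExp (-h)) - (cExp h * b * cExp (-h)) * D)) *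
        cExp h := by
  rw [cExp_two_nsmul, cExp_neg_two_nsmul]
  exact sandwich_mul_twisted_commutator (cExp_neg_mul_cExp h) D Dinv b

end cExp

theorem stmt4_general {H : Type*} [NormedAddCommGroup H] [InnerProductSpace ℂ H] [CompleteSpace H]
    (D Dinv γ h : H →L[ℂ] H)
    (hD1 : D * Dinv = 1) (hD2 : Dinv * D = 1)
    (hγh : Commute γ h)
    (Tr : (H →L[ℂ] H) →ₗ[ℂ] ℂ) (hTr : ∀ S T : H →L[ℂ] H, Tr (S * T) = Tr (T * S))
    (p : ℕ) (a : Fin (p + 1) → (H →L[ℂ] H)) :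
    ((cExp (-h) * Dinv * cExp (-h)) * (cExp h * D * cExp h) = 1 ∧
      (cExp h * D * cExp h) * (cExp (-h) * Dinv * cExp (-h)) = 1) ∧
    (∀ b : H →L[ℂ] H,
      (cExp (-h) * Dinv * cExp (-h)) *
          ((cExp h * D * cExp h) * b -
            (cExp (2 • h) * b * cExp (-(2 • h))) * (cExp h * D * cExp h)) =
        cExp (-h) *
            (Dinv * (D * (cExp h * b * cExp (-h)) - (cExp h * b * cExp (-h)) * D)) *
          cExp h) ∧
    Tr (γ * (List.ofFn fun i : Fin (p + 1) =>
          (cExp (-h) * Dinv * cExp (-h)) *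
            ((cExp h * D * cExp h) * a i -
              (cExp (2 • h) * a i * cExp (-(2 • h))) * (cExp h * D * cExp h))).prod) =
      Tr (γ * (List.ofFn fun i : Fin (p + 1) =>
          Dinv * (D * (cExp h * a i * cExp (-h)) -
            (cExp h * a i * cExp (-h)) * D)).prod) := by
  have hEF := cExp_mul_cExp_neg h
  have hFE := cExp_neg_mul_cExp h
  refine ⟨⟨sandwich_mul_sandwich_eq_one hD2 hFE, sandwich_mul_sandwich_eq_one hD1 hEF⟩,
    cExp_conformal_twisted_commutator D Dinv h, ?_⟩
  simp only [cExp_conformal_twisted_commutator, List.prod_ofFn_conj hEF hFE]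
  exact trace_mul_conj Tr hTr hγh.exp_right hEF _

/-- In the conformally perturbed setting, if `D` is invertible (with inverse
`Dinv`) then `D_h = e^h D e^h` is invertible with inverse `e^{-h} D^{-1} e^{-h}`, one has
`D_h^{-1} [D_h, a]_{σ_h} = e^{-h} D^{-1} [D, σ_{h/2}(a)] e^h`, and consequently for any
`a_0, …, a_p`,
`Tr(γ D_h^{-1}[D_h,a_0]_{σ_h} ⋯ D_h^{-1}[D_h,a_p]_{σ_h})
  = Tr(γ D^{-1}[D,σ_{h/2}(a_0)] ⋯ D^{-1}[D,σ_{h/2}(a_p)])`,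
`Tr` being a tracial functional (the operator trace on trace-class products). -/
theorem stmt4 {H : Type*} [NormedAddCommGroup H] [InnerProductSpace ℂ H] [CompleteSpace H]
    (D Dinv γ h : H →L[ℂ] H) (hh : IsSelfAdjoint h)
    (hD1 : D * Dinv = 1) (hD2 : Dinv * D = 1)
    (hγh : Commute γ h) (hγD : γ * D = -(D * γ))
    (Tr : (H →L[ℂ] H) →ₗ[ℂ] ℂ) (hTr : ∀ S T : H →L[ℂ] H, Tr (S * T) = Tr (T * S))
    (p : ℕ) (a : Fin (p + 1) → (H →L[ℂ] H)) :
    ((cExp (-h) * Dinv * cExp (-h)) * (cExp h * D * cExp h) = 1 ∧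
      (cExp h * D * cExp h) * (cExp (-h) * Dinv * cExp (-h)) = 1) ∧
    (∀ b : H →L[ℂ] H,
      (cExp (-h) * Dinv * cExp (-h)) *
          ((cExp h * D * cExp h) * b -
            (cExp (2 • h) * b * cExp (-(2 • h))) * (cExp h * D * cExp h)) =
        cExp (-h) *
            (Dinv * (D * (cExp h * b * cExp (-h)) - (cExp h * b * cExp (-h)) * D)) *
          cExp h) ∧
    Tr (γ * (List.ofFn fun i : Fin (p + 1) =>
          (cExp (-h) * Dinv * cExp (-h)) *
            ((cExp h * D * cExp h) * a i -
              (cExp (2 • h) * a i * cExp (-(2 • h))) * (cExp h * D * cExp h))).prod) =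
      Tr (γ * (List.ofFn fun i : Fin (p + 1) =>
          Dinv * (D * (cExp h * a i * cExp (-h)) -
            (cExp h * a i * cExp (-h)) * D)).prod) :=
  stmt4_general D Dinv γ h hD1 hD2 hγh Tr hTr p a
end

section
/- (Twisted iterated Leibniz rule) Let σ be an automorphism of an algebra B of operators and ∇_σ(P) = D² P - σ²(P) D² a σ²-twisted derivation of B (assuming σ commutes with ∇_σ in the sense that σ∘∇_σ = ∇_σ∘σ). Then for all P_1,...,P_q in B and m ≥ 0: ∇_σ^m(P_1 P_2 ··· P_q) = Σ_{m_1+...+m_q = m} (m!/(m_1!···m_q!)) ∇_σ^{m_1}(σ^{2(m_2+...+m_q)}(P_1)) ∇_σ^{m_2}(σ^{2(m_3+...+m_q)}(P_2)) ··· ∇_σ^{m_q}(P_q). -/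
/-!
For two factors the twisted rule gives, by the Pascal-triangle induction of the ordinary Leibniz
rule, `∇^n(xy) = Σ_{a+b=n} C(n,a) ∇^a(τ^b x) ∇^b y` with `τ = σ²`: each derivative that falls on
the right factor twists the left one by `τ`, and `τ` commutes with `∇`. The general formula
follows by induction on the number of factors, splitting off the first one; the binomial
coefficient times the multinomial coefficient of the remaining factors is the multinomial
coefficient of all of them.
-/

open Finset

theorem Nat.multinomial_map {α β : Type*} (e : α ↪ β) (s : Finset α) (f : β → ℕ) :
    Nat.multinomial (s.map e) f = Nat.multinomial s (f ∘ e) := by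
  simp only [Nat.multinomial, sum_map, prod_map, Function.comp_apply]

theorem Nat.multinomial_univ_fin_cons {q : ℕ} (a : ℕ) (c : Fin q → ℕ) :
    Nat.multinomial univ (Fin.cons a c : Fin (q + 1) → ℕ) =
      (a + ∑ i, c i).choose a * Nat.multinomial univ c := by
  rw [Fin.univ_succ, Nat.multinomial_cons, Nat.multinomial_map, sum_map]
  rfl

theorem Finset.Nat.sum_antidiagonalTuple_succ {M : Type*} [AddCommMonoid M] (q n : ℕ)
    (f : (Fin (q + 1) → ℕ) → M) :
    ∑ c ∈ antidiagonalTuple (q + 1) n, f c =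
      ∑ p ∈ antidiagonal n, ∑ c ∈ antidiagonalTuple q p.2, f (Fin.cons p.1 c) := by
  rw [sum_sigma']
  refine sum_nbij' (fun c => ⟨(c 0, ∑ i, Fin.tail c i), Fin.tail c⟩)
    (fun x => Fin.cons x.1.1 x.2) ?_ ?_ ?_ ?_ ?_
  all_goals simp_all [Nat.mem_antidiagonalTuple, Fin.sum_univ_succ, Fin.tail]

def IsTwistedDerivation {B : Type*} [Semiring B] (τ : B →+* B) (D : B →+ B) : Prop :=
  ∀ x y, D (x * y) = τ x * D y + D x * y

namespace IsTwistedDerivation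

variable {B : Type*} [Semiring B] {τ : B →+* B} {D : B →+ B}

theorem map_one [IsRightCancelAdd B] (hD : IsTwistedDerivation τ D) : D 1 = 0 := by
  simpa using (hD 1 1).symm

theorem iterate_map_mul (hD : IsTwistedDerivation τ D) (hcomm : Function.Commute D τ)
    (n : ℕ) (x y : B) :
    D^[n] (x * y) = ∑ p ∈ antidiagonal n, n.choose p.1 • (D^[p.1] (τ^[p.2] x) * D^[p.2] y) := by
  induction n with
  | zero => simp
  | succ n ih =>
    rw [sum_antidiagonal_choose_succ_nsmul (fun i j => D^[i] (τ^[j] x) * D^[j] y) n]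
    simp only [Function.iterate_succ_apply', ih, map_sum, map_nsmul, hD _, smul_add,
      sum_add_distrib, (hcomm.iterate_left _).eq]
    congr 1
    refine sum_congr rfl fun p hp => ?_
    rw [n.choose_symm_of_eq_add (HasAntidiagonal.mem_antidiagonal.1 hp).symm]

theorem iterate_map_ofFn_prod [IsRightCancelAdd B] (hD : IsTwistedDerivation τ D)
    (hcomm : Function.Commute D τ) {q : ℕ} (m : ℕ) (P : Fin q → B) :
    D^[m] (List.ofFn P).prod =
      ∑ c ∈ Nat.antidiagonalTuple q m, Nat.multinomial univ c •
        (List.ofFn fun i => D^[c i] (τ^[∑ j ∈ Ioi i, c j] (P i))).prod := by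
  induction q generalizing m with
  | zero =>
    cases m with
    | zero => simp
    | succ m => simp [hD.map_one]
  | succ q ih =>
    rw [List.ofFn_succ, List.prod_cons, hD.iterate_map_mul hcomm, Nat.sum_antidiagonalTuple_succ]
    refine sum_congr rfl fun p hp => ?_
    rw [ih, mul_sum, smul_sum]
    refine sum_congr rfl fun c hc => ?_
    rw [Nat.mem_antidiagonalTuple] at hc
    rw [HasAntidiagonal.mem_antidiagonal] at hp
    rw [Nat.multinomial_univ_fin_cons, hc, hp, List.ofFn_succ, List.prod_cons, mul_smul_comm,
      smul_smul]
    simp only [Fin.cons_zero, Fin.cons_succ, Fin.sum_Ioi_zero, Fin.sum_Ioi_succ, hc]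

end IsTwistedDerivation

/-- Twisted iterated Leibniz rule: if `σ` is an automorphism of `B` and
`∇_σ` an additive map satisfying the `σ²`-twisted Leibniz rule
`∇_σ(PQ) = σ²(P) ∇_σ(Q) + ∇_σ(P) Q` and commuting with `σ`, then for all `P_1,…,P_q` and
`m ≥ 0`:
`∇_σ^m(P_1 ⋯ P_q) = Σ_{m_1+…+m_q=m} (m!/(m_1!⋯m_q!))
   ∇_σ^{m_1}(σ^{2(m_2+…+m_q)}(P_1)) ⋯ ∇_σ^{m_q}(P_q)`. -/
theorem stmt16 {B : Type*} [Ring B] (σ : B ≃+* B) (nab : B → B)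
    (hadd : ∀ x y : B, nab (x + y) = nab x + nab y)
    (hLeib : ∀ x y : B, nab (x * y) = σ (σ x) * nab y + nab x * y)
    (hcomm : ∀ x : B, nab (σ x) = σ (nab x))
    (q m : ℕ) (P : Fin q → B) :
    nab^[m] ((List.ofFn P).prod) =
      ∑ c ∈ Finset.Nat.antidiagonalTuple q m,
        Nat.multinomial Finset.univ c •
          (List.ofFn fun i : Fin q =>
            nab^[c i] ((σ ^ (2 * ∑ j ∈ Finset.Ioi i, c j)) (P i))).prod := by
  let D : B →+ B := AddMonoidHom.mk' nab hadd
  let τ : B →+* B := (σ ^ 2 : B ≃+* B)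
  have hD : IsTwistedDerivation τ D := hLeib
  have hτ : ∀ k, (⇑τ)^[k] = ⇑(σ ^ (2 * k)) := fun k => by
    rw [pow_mul, RingAut.coe_pow]; rfl
  have hcommτ : Function.Commute D τ := by
    rw [show ⇑τ = (⇑σ)^[2] from RingAut.coe_pow σ 2]
    exact Function.Commute.iterate_right hcomm 2
  have h := hD.iterate_map_ofFn_prod hcommτ m P
  simp only [hτ] at h
  exact h
end
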